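/- Every word over the alphabet of letters admits exactly one non-splitting reduction, up to permutation of adjacent commuting letters. -/

import Mathlib

variable {V : Type*} [DecidableEq V] [Fintype V]

/-- A letter is a nonempty connected subset of the graph `G`
(connectedness of the induced subgraph includes nonemptiness). -/
def IsLetter (G : SimpleGraph V) (s : Finset V) : Prop :=
  (G.induce (↑s : Set V)).Connected

/-- The type of letters of `G`. -/
def Letter (G : SimpleGraph V) := {s : Finset V // IsLetter G s}

/-- A word is a finite sequence of letters. -/
abbrev Word (G : SimpleGraph V) := List (Letter G)

/-- Two letters commute iff their union is not a letter (is disconnected). -/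
def LCommute (G : SimpleGraph V) (s t : Letter G) : Prop :=
  ¬ IsLetter G (s.1 ∪ t.1)

/-- Two words commute if their letters pairwise commute. -/
def WCommute (G : SimpleGraph V) (u v : Word G) : Prop :=
  ∀ s ∈ u, ∀ t ∈ v, LCommute G s t

/-- One swap of two adjacent commuting letters. -/
def LSwapStep (G : SimpleGraph V) (w w' : Word G) : Prop :=
  ∃ (a b : Word G) (s t : Letter G), LCommute G s t ∧
    w = a ++ s :: t :: b ∧ w' = a ++ t :: s :: b

/-- Equivalence (`≈`) of words: sequences of swaps of adjacent commuting letters. -/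
def WEquiv (G : SimpleGraph V) : Word G → Word G → Prop :=
  Relation.ReflTransGen (LSwapStep G)

/-- A word is reduced if there is no pair of comparable letters such that the
smaller one commutes with all letters strictly in between. -/
def WIsReduced (G : SimpleGraph V) (w : Word G) : Prop :=
  ¬ ∃ (a b c : Word G) (s t : Letter G),
      w = a ++ s :: (b ++ t :: c) ∧
      ((s.1 ⊆ t.1 ∧ ∀ r ∈ b, LCommute G s r) ∨
       (t.1 ⊆ s.1 ∧ ∀ r ∈ b, LCommute G t r))

/-- A splitting of a letter `s`: a (possibly empty) word whose letters are
proper subsets of `s`. -/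
def IsSplitting (G : SimpleGraph V) (x : Word G) (s : Letter G) : Prop :=
  ∀ t ∈ x, t.1 ⊂ s.1

/-- `SplitStep G u v`: `u` is obtained from `v` by replacing one occurrence of a
letter by a splitting of it. -/
def SplitStep (G : SimpleGraph V) (u v : Word G) : Prop :=
  ∃ (a b x : Word G) (s : Letter G),
    v = a ++ s :: b ∧ IsSplitting G x s ∧ u = a ++ x ++ b

/-- One step of the splitting order up to equivalence. -/
def PrecStep (G : SimpleGraph V) (u v : Word G) : Prop :=
  ∃ u' v', WEquiv G v v' ∧ SplitStep G u' v' ∧ WEquiv G u u'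

/-- The splitting order `≺` on words. -/
def WPrec (G : SimpleGraph V) : Word G → Word G → Prop :=
  Relation.TransGen (PrecStep G)

/-- `u ≼ v` : `u ≺ v` or `u ≈ v`. -/
def WPreceq (G : SimpleGraph V) (u v : Word G) : Prop :=
  WPrec G u v ∨ WEquiv G u v

/-- Absorption: if `s ⊆ t`, replace a subword `s·t` (or `t·s`) by `t`. -/
def AbsorbStep (G : SimpleGraph V) (w w' : Word G) : Prop :=
  ∃ (a b : Word G) (s t : Letter G), s.1 ⊆ t.1 ∧
    (w = a ++ s :: t :: b ∨ w = a ++ t :: s :: b) ∧ w' = a ++ t :: b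

/-- A non-splitting reduction step: Commutation or Absorption. -/
def NSStep (G : SimpleGraph V) (w w' : Word G) : Prop :=
  LSwapStep G w w' ∨ AbsorbStep G w w'

/-- `NSRed G u v`: `v` is a non-splitting reduction of `u`, i.e. a reduced word
obtained from `u` by Commutation and Absorption steps only. -/
def NSRed (G : SimpleGraph V) (u v : Word G) : Prop :=
  Relation.ReflTransGen (NSStep G) u v ∧ WIsReduced G v

/-- The letter `t` is left-absorbed by the word `w`: `t` is contained in some
letter of `w` and commutes with all earlier letters. -/
def LetterLeftAbsorbed (G : SimpleGraph V) (t : Letter G) (w : Word G) : Prop :=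
  ∃ (a b : Word G) (s : Letter G), w = a ++ s :: b ∧ t.1 ⊆ s.1 ∧ ∀ r ∈ a, LCommute G t r

/-- The letter `t` is right-absorbed by the word `w`. -/
def LetterRightAbsorbed (G : SimpleGraph V) (t : Letter G) (w : Word G) : Prop :=
  ∃ (a b : Word G) (s : Letter G), w = a ++ s :: b ∧ t.1 ⊆ s.1 ∧ ∀ r ∈ b, LCommute G t r

/-- The letter `t` is properly left-absorbed by the word `w`. -/
def LetterProperLeftAbsorbed (G : SimpleGraph V) (t : Letter G) (w : Word G) : Prop :=
  ∃ (a b : Word G) (s : Letter G), w = a ++ s :: b ∧ t.1 ⊂ s.1 ∧ ∀ r ∈ a, LCommute G t r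

/-- The letter `t` is properly right-absorbed by the word `w`. -/
def LetterProperRightAbsorbed (G : SimpleGraph V) (t : Letter G) (w : Word G) : Prop :=
  ∃ (a b : Word G) (s : Letter G), w = a ++ s :: b ∧ t.1 ⊂ s.1 ∧ ∀ r ∈ b, LCommute G t r

/-- A word `u` is left-absorbed by `w` if each of its letters is. -/
def LeftAbsorbed (G : SimpleGraph V) (u w : Word G) : Prop :=
  ∀ t ∈ u, LetterLeftAbsorbed G t w

/-- A word `u` is right-absorbed by `w` if each of its letters is. -/
def RightAbsorbed (G : SimpleGraph V) (u w : Word G) : Prop :=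
  ∀ t ∈ u, LetterRightAbsorbed G t w

/-- A word `u` is properly left-absorbed by `w` if each of its letters is. -/
def ProperLeftAbsorbed (G : SimpleGraph V) (u w : Word G) : Prop :=
  ∀ t ∈ u, LetterProperLeftAbsorbed G t w

/-- A word `u` is properly right-absorbed by `w` if each of its letters is. -/
def ProperRightAbsorbed (G : SimpleGraph V) (u w : Word G) : Prop :=
  ∀ t ∈ u, LetterProperRightAbsorbed G t w

/-- A commuting word: its letters pairwise commute. -/
def IsCommuting (G : SimpleGraph V) (u : Word G) : Prop :=
  List.Pairwise (LCommute G) u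

/-- The letter `s` is an end of the word `u` if `u ≈ v·s` for some `v`. -/
def IsEnd (G : SimpleGraph V) (s : Letter G) (u : Word G) : Prop :=
  ∃ v, WEquiv G u (v ++ [s])

/-- `t` is the final segment of `u`: the commuting word consisting of all ends of `u`. -/
def IsFinalSegment (G : SimpleGraph V) (t u : Word G) : Prop :=
  IsCommuting G t ∧ ∀ s, s ∈ t ↔ IsEnd G s u

/-!
Call an occurrence of a letter *absorbable* into another occurrence if it is contained in it and
commutes with every letter in between. Erasing an absorbable occurrence in some word equivalent
to the current one is a terminating rewriting relation, compatible with equivalence, whose normal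
forms are exactly the reduced words, and every non-splitting reduction is such a rewriting
followed by commutations. Two such erasures in the same word either give equivalent words (when
two equal letters absorb each other) or can both be continued by erasing the other occurrence,
which survives the first erasure, to the same word. Newman's lemma modulo equivalence then makes
the normal form unique up to equivalence.
-/

namespace Relation

variable {α : Type*} {E R : α → α → Prop}

def IsNormalForm (R : α → α → Prop) (a : α) : Prop :=
  ∀ b, ¬ R a b

theorem exists_isNormalForm (hwf : WellFounded (flip R)) (a : α) :
    ∃ b, ReflTransGen R a b ∧ IsNormalForm R b := by
  induction a using hwf.induction with
  | _ a ih =>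
    by_cases h : IsNormalForm R a
    · exact ⟨a, .refl, h⟩
    · obtain ⟨c, hac⟩ := not_forall_not.mp h
      obtain ⟨b, hcb, hb⟩ := ih c hac
      exact ⟨b, .head hac hcb, hb⟩

theorem IsNormalForm.eq_of_reflTransGen {a b : α} (ha : IsNormalForm R a)
    (h : ReflTransGen R a b) : b = a := by
  rcases h.cases_head with rfl | ⟨c, hac, -⟩
  · rfl
  · exact (ha c hac).elim

section Compatible

variable (hcompat : ∀ ⦃a a' b⦄, E a a' → R a' b → R a b)
include hcompat

theorem IsNormalForm.of_equiv {a b : α} (h : E a b) (ha : IsNormalForm R a) :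
    IsNormalForm R b :=
  fun c hbc ↦ ha c (hcompat h hbc)

theorem ReflTransGen.exists_of_equiv (hE : Equivalence E) {a a' b : α} (h : E a a')
    (h' : ReflTransGen R a' b) : ∃ b', ReflTransGen R a b' ∧ E b' b := by
  rcases h'.cases_head with rfl | ⟨c, hac, hcb⟩
  · exact ⟨a, .refl, h⟩
  · exact ⟨b, .head (hcompat h hac) hcb, hE.refl b⟩

theorem newman_mod (hE : Equivalence E) (hwf : WellFounded (flip R))
    (hlocal : ∀ ⦃a b₁ b₂⦄, R a b₁ → R a b₂ → E b₁ b₂ ∨ ∃ c₁ c₂, R b₁ c₁ ∧ R b₂ c₂ ∧ E c₁ c₂)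
    {a b₁ b₂ : α} (h₁ : ReflTransGen R a b₁) (h₂ : ReflTransGen R a b₂)
    (hb₁ : IsNormalForm R b₁) (hb₂ : IsNormalForm R b₂) : E b₁ b₂ := by
  induction a using hwf.induction generalizing b₁ b₂ with
  | _ a ih =>
  rcases h₁.cases_head with rfl | ⟨x₁, hax₁, hx₁⟩
  · rw [hb₁.eq_of_reflTransGen h₂]
    exact hE.refl _
  rcases h₂.cases_head with rfl | ⟨x₂, hax₂, hx₂⟩
  · exact (hb₂ x₁ hax₁).elim
  rcases hlocal hax₁ hax₂ with hx | ⟨c₁, c₂, hc₁, hc₂, hc⟩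
  · obtain ⟨n, hx₁n, hnb₂⟩ := ReflTransGen.exists_of_equiv hcompat hE hx hx₂
    have hn : IsNormalForm R n := hb₂.of_equiv hcompat (hE.symm hnb₂)
    exact hE.trans (ih x₁ hax₁ hx₁ hx₁n hb₁ hn) hnb₂
  · obtain ⟨n₁, hc₁n₁, hn₁⟩ := exists_isNormalForm hwf c₁
    obtain ⟨n₂, hc₂n₂, hn₂n₁⟩ := ReflTransGen.exists_of_equiv hcompat hE (hE.symm hc) hc₁n₁
    have hn₂ : IsNormalForm R n₂ := hn₁.of_equiv hcompat (hE.symm hn₂n₁)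
    have hb₁n₁ : E b₁ n₁ := ih x₁ hax₁ hx₁ (.head hc₁ hc₁n₁) hb₁ hn₁
    have hb₂n₂ : E b₂ n₂ := ih x₂ hax₂ hx₂ (.head hc₂ hc₂n₂) hb₂ hn₂
    exact hE.trans hb₁n₁ (hE.trans (hE.symm hn₂n₁) (hE.symm hb₂n₂))

end Compatible

end Relation

theorem swap_succ_cases (p n : ℕ) :
    n = p ∧ Equiv.swap p (p + 1) n = p + 1 ∨ n = p + 1 ∧ Equiv.swap p (p + 1) n = p ∨
      n ≠ p ∧ n ≠ p + 1 ∧ Equiv.swap p (p + 1) n = n := by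
  rw [Equiv.swap_apply_def]
  split_ifs <;> omega

def idxAfterErase (i n : ℕ) : ℕ :=
  if n < i then n else n - 1

namespace List

variable {α : Type*}

theorem exists_eq_append_cons_of_getElem? {l : List α} {i : ℕ} {x : α} (h : l[i]? = some x) :
    ∃ A B, l = A ++ x :: B ∧ A.length = i := by
  obtain ⟨hi, rfl⟩ := getElem?_eq_some_iff.mp h
  exact ⟨l.take i, l.drop (i + 1), by rw [← drop_eq_getElem_cons hi, take_append_drop],
    by simp [hi.le]⟩

theorem getElem?_append_cons_append_cons (A M B : List α) (x y : α) {n : ℕ}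
    (hn : n < M.length) : (A ++ x :: (M ++ y :: B))[A.length + 1 + n]? = M[n]? := by
  rw [getElem?_append_right (by omega), show A.length + 1 + n - A.length = n + 1 by omega]
  simp [getElem?_append_left hn]

theorem getElem?_append_cons_append_cons_length (A M B : List α) (x y : α) :
    (A ++ x :: (M ++ y :: B))[A.length + 1 + M.length]? = some y := by
  rw [getElem?_append_right (by omega),
    show A.length + 1 + M.length - A.length = M.length + 1 by omega]
  simp

theorem eraseIdx_append_cons_length (A X : List α) (x : α) :
    (A ++ x :: X).eraseIdx A.length = A ++ X := by
  simp [eraseIdx_append_of_length_le]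

theorem eraseIdx_append_cons_append_cons (A M B : List α) (x y : α) :
    (A ++ x :: (M ++ y :: B)).eraseIdx (A.length + 1 + M.length) = A ++ x :: (M ++ B) := by
  rw [eraseIdx_append_of_length_le (by omega),
    show A.length + 1 + M.length - A.length = M.length + 1 by omega]
  simp [eraseIdx_append_of_length_le]

theorem eraseIdx_append_cons_cons_length_succ (A B : List α) (x y : α) :
    (A ++ x :: y :: B).eraseIdx (A.length + 1) = A ++ x :: B := by
  simpa using eraseIdx_append_cons_append_cons A [] B x y

theorem getElem?_and_between_iff {l : List α} {p q : ℕ} (hpq : p < q) {x y : α}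
    {P : α → Prop} :
    (l[p]? = some x ∧ l[q]? = some y ∧ ∀ m r, p < m ∧ m < q → l[m]? = some r → P r) ↔
      ∃ A M B, l = A ++ x :: (M ++ y :: B) ∧ A.length = p ∧ A.length + 1 + M.length = q ∧
        ∀ r ∈ M, P r := by
  constructor
  · rintro ⟨hx, hy, hP⟩
    obtain ⟨C, B, rfl, hC⟩ := exists_eq_append_cons_of_getElem? hy
    rw [getElem?_append_left (by omega)] at hx
    obtain ⟨A, M, rfl, hA⟩ := exists_eq_append_cons_of_getElem? hx
    simp only [length_append, length_cons] at hC
    refine ⟨A, M, B, by simp, hA, by omega, fun r hr ↦ ?_⟩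
    obtain ⟨n, hn, rfl⟩ := mem_iff_getElem.mp hr
    refine hP (A.length + 1 + n) _ (by omega) ?_
    rw [append_assoc, cons_append, getElem?_append_cons_append_cons _ _ _ _ _ hn,
      getElem?_eq_getElem hn]
  · rintro ⟨A, M, B, rfl, rfl, rfl, hP⟩
    refine ⟨by simp, ?_, fun m r hm hr ↦ ?_⟩
    · exact getElem?_append_cons_append_cons_length A M B x y
    obtain ⟨n, rfl⟩ : ∃ n, m = A.length + 1 + n := ⟨m - A.length - 1, by omega⟩
    rw [getElem?_append_cons_append_cons _ _ _ _ _ (by omega)] at hr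
    exact hP r (mem_of_getElem? hr)

theorem getElem?_append_cons_cons_swap (c d : List α) (x y : α) (m : ℕ) :
    (c ++ y :: x :: d)[m]? = (c ++ x :: y :: d)[Equiv.swap c.length (c.length + 1) m]? := by
  rcases swap_succ_cases c.length m with ⟨rfl, h⟩ | ⟨rfl, h⟩ | ⟨hp, hp', h⟩
  · rw [h, getElem?_append_right (by omega), getElem?_append_right (by omega)]
    simp
  · rw [h, getElem?_append_right (by omega), getElem?_append_right (by omega)]
    simp
  · rw [h]
    rcases Nat.lt_or_ge m c.length with hm | hm
    · rw [getElem?_append_left hm, getElem?_append_left hm]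
    · obtain ⟨n, rfl⟩ : ∃ n, m = c.length + 2 + n := ⟨m - c.length - 2, by omega⟩
      rw [getElem?_append_right (by omega), getElem?_append_right (by omega),
        show c.length + 2 + n - c.length = n + 2 by omega]
      simp

theorem getElem?_eraseIdx_idxAfterErase (l : List α) {i n : ℕ} (h : n ≠ i) :
    (l.eraseIdx i)[idxAfterErase i n]? = l[n]? := by
  unfold idxAfterErase
  split_ifs with hn
  · exact getElem?_eraseIdx_of_lt hn
  · rw [getElem?_eraseIdx_of_ge (by omega)]
    congr 1
    omega

theorem eraseIdx_eraseIdx_comm (l : List α) (i k : ℕ) :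
    (l.eraseIdx i).eraseIdx (idxAfterErase i k) = (l.eraseIdx k).eraseIdx (idxAfterErase k i) := by
  apply List.ext_getElem?
  intro n
  simp only [List.getElem?_eraseIdx, idxAfterErase]
  split_ifs <;> first | rfl | (congr 1; omega)

end List

section Words

omit [Fintype V]

variable {G : SimpleGraph V}

theorem LCommute.symm {s t : Letter G} (h : LCommute G s t) : LCommute G t s := by
  rwa [LCommute, Finset.union_comm]

/-- `r ∪ t = (r ∪ s) ∪ t` is connected as soon as `r ∪ s` is, because `s` is a nonempty
subset of the connected set `t`. -/
theorem LCommute.of_subset_right {r s t : Letter G} (h : LCommute G r t) (hst : s.1 ⊆ t.1) :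
    LCommute G r s := by
  intro hrs
  apply h
  obtain ⟨⟨x, hx⟩⟩ := s.2.nonempty
  have hunion : ((r.1 ∪ t.1 : Finset V) : Set V) = ((r.1 ∪ s.1 : Finset V) : Set V) ∪ t.1 := by
    push_cast
    rw [Set.union_assoc, Set.union_eq_self_of_subset_left (Finset.coe_subset.mpr hst)]
  rw [IsLetter, hunion]
  exact SimpleGraph.induce_union_connected hrs.preconnected t.2.preconnected
    ⟨x, by simp [hx], by simpa using hst hx⟩

theorem LSwapStep.symm {u v : Word G} (h : LSwapStep G u v) : LSwapStep G v u := by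
  obtain ⟨a, b, s, t, hst, rfl, rfl⟩ := h
  exact ⟨a, b, t, s, hst.symm, rfl, rfl⟩

theorem LSwapStep.length_eq {u v : Word G} (h : LSwapStep G u v) : u.length = v.length := by
  obtain ⟨a, b, s, t, -, rfl, rfl⟩ := h
  simp

theorem WEquiv.symm {u v : Word G} (h : WEquiv G u v) : WEquiv G v u := by
  induction h with
  | refl => exact .refl
  | tail _ hstep ih => exact .head hstep.symm ih

theorem wEquiv_equivalence : Equivalence (WEquiv G) :=
  ⟨fun _ ↦ .refl, WEquiv.symm, .trans⟩

theorem WEquiv.length_eq {u v : Word G} (h : WEquiv G u v) : u.length = v.length := by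
  induction h with
  | refl => rfl
  | tail _ hstep ih => exact ih.trans hstep.length_eq

theorem WEquiv.nsSteps {u v : Word G} (h : WEquiv G u v) :
    Relation.ReflTransGen (NSStep G) u v :=
  Relation.ReflTransGen.mono (fun _ _ ↦ Or.inl) _ _ h

theorem wEquiv_move_across {s : Letter G} {M : Word G} (hM : ∀ r ∈ M, LCommute G s r)
    (A B : Word G) : WEquiv G (A ++ s :: (M ++ B)) (A ++ (M ++ s :: B)) := by
  induction M generalizing A with
  | nil => exact .refl
  | cons r M ih =>
    have hstep : LSwapStep G (A ++ s :: (r :: M ++ B)) ((A ++ [r]) ++ s :: (M ++ B)) :=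
      ⟨A, M ++ B, s, r, hM r (by simp), by simp, by simp⟩
    simpa [WEquiv] using Relation.ReflTransGen.head hstep
      (ih (fun x hx ↦ hM x (List.mem_cons_of_mem r hx)) (A ++ [r]))

def Absorbable (G : SimpleGraph V) (u : Word G) (i j : ℕ) : Prop :=
  i ≠ j ∧ ∃ s t : Letter G, u[i]? = some s ∧ u[j]? = some t ∧ s.1 ⊆ t.1 ∧
    ∀ m r, (i < m ∧ m < j ∨ j < m ∧ m < i) → u[m]? = some r → LCommute G s r

theorem Absorbable.lt_length {u : Word G} {i j : ℕ} (h : Absorbable G u i j) :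
    i < u.length := by
  obtain ⟨-, s, -, hs, -⟩ := h
  exact (List.getElem?_eq_some_iff.mp hs).1

theorem absorbable_iff_of_lt {u : Word G} {i j : ℕ} (hij : i < j) :
    Absorbable G u i j ↔ ∃ A M B s t, u = A ++ s :: (M ++ t :: B) ∧ A.length = i ∧
      A.length + 1 + M.length = j ∧ s.1 ⊆ t.1 ∧ ∀ r ∈ M, LCommute G s r := by
  constructor
  · rintro ⟨-, s, t, hs, ht, hst, hbetween⟩
    obtain ⟨A, M, B, hu, hA, hM, hMs⟩ := (List.getElem?_and_between_iff hij).mp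
      ⟨hs, ht, fun m r hm ↦ hbetween m r (.inl hm)⟩
    exact ⟨A, M, B, s, t, hu, hA, hM, hst, hMs⟩
  · rintro ⟨A, M, B, s, t, hu, hA, hM, hst, hMs⟩
    obtain ⟨hs, ht, hbetween⟩ := (List.getElem?_and_between_iff hij).mpr
      ⟨A, M, B, hu, hA, hM, hMs⟩
    exact ⟨hij.ne, s, t, hs, ht, hst, fun m r hm ↦ hbetween m r (hm.resolve_right (by omega))⟩

theorem absorbable_iff_of_gt {u : Word G} {i j : ℕ} (hji : j < i) :
    Absorbable G u i j ↔ ∃ A M B s t, u = A ++ t :: (M ++ s :: B) ∧ A.length = j ∧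
      A.length + 1 + M.length = i ∧ s.1 ⊆ t.1 ∧ ∀ r ∈ M, LCommute G s r := by
  constructor
  · rintro ⟨-, s, t, hs, ht, hst, hbetween⟩
    obtain ⟨A, M, B, hu, hA, hM, hMs⟩ := (List.getElem?_and_between_iff hji).mp
      ⟨ht, hs, fun m r hm ↦ hbetween m r (.inr hm)⟩
    exact ⟨A, M, B, s, t, hu, hA, hM, hst, hMs⟩
  · rintro ⟨A, M, B, s, t, hu, hA, hM, hst, hMs⟩
    obtain ⟨ht, hs, hbetween⟩ := (List.getElem?_and_between_iff hji).mpr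
      ⟨A, M, B, hu, hA, hM, hMs⟩
    exact ⟨hji.ne', s, t, hs, ht, hst, fun m r hm ↦ hbetween m r (hm.resolve_left (by omega))⟩

theorem not_wIsReduced_iff {u : Word G} : ¬ WIsReduced G u ↔ ∃ i j, Absorbable G u i j := by
  rw [WIsReduced, not_not]
  constructor
  · rintro ⟨A, M, B, s, t, hu, ⟨hst, hMs⟩ | ⟨hts, hMt⟩⟩
    · exact ⟨_, _, (absorbable_iff_of_lt (by omega)).mpr ⟨A, M, B, s, t, hu, rfl, rfl, hst, hMs⟩⟩
    · exact ⟨_, _, (absorbable_iff_of_gt (by omega)).mpr ⟨A, M, B, t, s, hu, rfl, rfl, hts, hMt⟩⟩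
  · rintro ⟨i, j, h⟩
    rcases h.1.lt_or_gt with hij | hji
    · obtain ⟨A, M, B, s, t, hu, -, -, hst, hMs⟩ := (absorbable_iff_of_lt hij).mp h
      exact ⟨A, M, B, s, t, hu, .inl ⟨hst, hMs⟩⟩
    · obtain ⟨A, M, B, s, t, hu, -, -, hst, hMs⟩ := (absorbable_iff_of_gt hji).mp h
      exact ⟨A, M, B, t, s, hu, .inr ⟨hst, hMs⟩⟩

theorem Absorbable.nsSteps_eraseIdx {u : Word G} {i j : ℕ} (h : Absorbable G u i j) :
    Relation.ReflTransGen (NSStep G) u (u.eraseIdx i) := by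
  rcases h.1.lt_or_gt with hij | hji
  · obtain ⟨A, M, B, s, t, rfl, rfl, -, hst, hMs⟩ := (absorbable_iff_of_lt hij).mp h
    rw [List.eraseIdx_append_cons_length]
    exact (wEquiv_move_across hMs A (t :: B)).nsSteps.tail
      (.inr ⟨A ++ M, B, s, t, hst, .inl (by simp), by simp⟩)
  · obtain ⟨A, M, B, s, t, rfl, -, rfl, hst, hMs⟩ := (absorbable_iff_of_gt hji).mp h
    rw [List.eraseIdx_append_cons_append_cons]
    have hmove : WEquiv G (A ++ t :: (M ++ s :: B)) (A ++ t :: s :: (M ++ B)) := by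
      simpa using (wEquiv_move_across hMs (A ++ [t]) B).symm
    exact hmove.nsSteps.tail (.inr ⟨A, M ++ B, s, t, hst, .inr rfl, rfl⟩)

theorem AbsorbStep.exists_absorbable {u v : Word G} (h : AbsorbStep G u v) :
    ∃ i j, Absorbable G u i j ∧ v = u.eraseIdx i := by
  obtain ⟨A, B, s, t, hst, rfl | rfl, rfl⟩ := h
  · refine ⟨A.length, A.length + 1,
      (absorbable_iff_of_lt (by omega)).mpr ⟨A, [], B, s, t, rfl, rfl, rfl, hst, by simp⟩, ?_⟩
    rw [List.eraseIdx_append_cons_length]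
  · refine ⟨A.length + 1, A.length,
      (absorbable_iff_of_gt (by omega)).mpr ⟨A, [], B, s, t, rfl, rfl, rfl, hst, by simp⟩, ?_⟩
    rw [List.eraseIdx_append_cons_cons_length_succ]

theorem wEquiv_eraseIdx_swap {c d : Word G} {x y : Letter G} (hxy : LCommute G x y) (i : ℕ) :
    WEquiv G ((c ++ x :: y :: d).eraseIdx i)
      ((c ++ y :: x :: d).eraseIdx (Equiv.swap c.length (c.length + 1) i)) := by
  rcases swap_succ_cases c.length i with ⟨rfl, h⟩ | ⟨rfl, h⟩ | ⟨hp, hp', h⟩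
  · rw [h, List.eraseIdx_append_cons_length, List.eraseIdx_append_cons_cons_length_succ]
    exact .refl
  · rw [h, List.eraseIdx_append_cons_length, List.eraseIdx_append_cons_cons_length_succ]
    exact .refl
  · rw [h]
    rcases Nat.lt_or_ge i c.length with hi | hi
    · rw [List.eraseIdx_append_of_lt_length hi, List.eraseIdx_append_of_lt_length hi]
      exact .single ⟨c.eraseIdx i, d, x, y, hxy, rfl, rfl⟩
    · obtain ⟨n, rfl⟩ : ∃ n, i = c.length + 2 + n := ⟨i - c.length - 2, by omega⟩
      rw [List.eraseIdx_append_of_length_le (by omega),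
        List.eraseIdx_append_of_length_le (by omega),
        show c.length + 2 + n - c.length = n + 2 by omega]
      exact .single ⟨c, d.eraseIdx n, x, y, hxy, rfl, rfl⟩

theorem LCommute.of_getElem?_adjacent {c d : Word G} {x y : Letter G} (hxy : LCommute G x y)
    {a b : Letter G} {k l : ℕ}
    (hkl : k = c.length ∧ l = c.length + 1 ∨ k = c.length + 1 ∧ l = c.length)
    (ha : (c ++ x :: y :: d)[k]? = some a) (hb : (c ++ x :: y :: d)[l]? = some b) :
    LCommute G a b := by
  have hx : (c ++ x :: y :: d)[c.length]? = some x := by simp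
  have hy : (c ++ x :: y :: d)[c.length + 1]? = some y := by
    rw [List.getElem?_append_right (by omega)]
    simp
  rcases hkl with ⟨rfl, rfl⟩ | ⟨rfl, rfl⟩
  · rw [hx, Option.some_inj] at ha
    rw [hy, Option.some_inj] at hb
    exact ha ▸ hb ▸ hxy
  · rw [hy, Option.some_inj] at ha
    rw [hx, Option.some_inj] at hb
    exact ha ▸ hb ▸ hxy.symm

theorem Absorbable.swap {c d : Word G} {x y : Letter G} (hxy : LCommute G x y) {i j : ℕ}
    (h : Absorbable G (c ++ x :: y :: d) i j) :
    Absorbable G (c ++ y :: x :: d)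
      (Equiv.swap c.length (c.length + 1) i) (Equiv.swap c.length (c.length + 1) j) := by
  set p := c.length
  set σ := Equiv.swap p (p + 1)
  have hget : ∀ m, (c ++ y :: x :: d)[m]? = (c ++ x :: y :: d)[σ m]? :=
    List.getElem?_append_cons_cons_swap c d x y
  have hσσ : ∀ m, σ (σ m) = m := Equiv.swap_apply_self _ _
  obtain ⟨hij, s, t, hs, ht, hst, hbetween⟩ := h
  refine ⟨σ.injective.ne hij, s, t, by rwa [hget, hσσ], by rwa [hget, hσσ], hst,
    fun m r hm hr ↦ ?_⟩
  rw [hget] at hr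
  by_cases hσm : i < σ m ∧ σ m < j ∨ j < σ m ∧ σ m < i
  · exact hbetween _ r hσm hr
  -- `σ` only exchanges `p` and `p + 1`, so betweenness can only be lost when `σ m` and an
  -- endpoint occupy these two positions
  have hcases : (σ m = p ∧ i = p + 1 ∨ σ m = p + 1 ∧ i = p) ∨
      (σ m = p ∧ j = p + 1 ∨ σ m = p + 1 ∧ j = p) := by
    rcases swap_succ_cases p i with ⟨_, hi⟩ | ⟨_, hi⟩ | ⟨_, _, hi⟩ <;>
      rcases swap_succ_cases p j with ⟨_, hj⟩ | ⟨_, hj⟩ | ⟨_, _, hj⟩ <;>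
      rcases swap_succ_cases p m with ⟨_, hm'⟩ | ⟨_, hm'⟩ | ⟨_, _, hm'⟩ <;>
      simp only [σ] at hσm hm ⊢ <;> omega
  rcases hcases with hmi | hmj
  · exact (hxy.of_getElem?_adjacent hmi hr hs).symm
  · exact ((hxy.of_getElem?_adjacent hmj hr ht).of_subset_right hst).symm

theorem absorbable_eraseIdx {u : Word G} {i k l : ℕ} (hk : k ≠ i) (hl : l ≠ i) (hkl : k ≠ l)
    {s t : Letter G} (hs : u[k]? = some s) (ht : u[l]? = some t) (hst : s.1 ⊆ t.1)
    (hbetween : ∀ m r, m ≠ i → (k < m ∧ m < l ∨ l < m ∧ m < k) → u[m]? = some r →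
      LCommute G s r) :
    Absorbable G (u.eraseIdx i) (idxAfterErase i k) (idxAfterErase i l) := by
  refine ⟨?_, s, t, by rwa [u.getElem?_eraseIdx_idxAfterErase hk],
    by rwa [u.getElem?_eraseIdx_idxAfterErase hl], hst, fun m r hm hr ↦ ?_⟩
  · unfold idxAfterErase
    split_ifs <;> omega
  · unfold idxAfterErase at hm
    rw [List.getElem?_eraseIdx] at hr
    split_ifs at hr hm <;> first
      | exact hbetween m r (by omega) (by omega) hr
      | exact hbetween (m + 1) r (by omega) (by omega) hr

theorem Absorbable.eraseIdx_of_ne {u : Word G} {i k l : ℕ} (h : Absorbable G u k l)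
    (hk : k ≠ i) (hl : l ≠ i) :
    Absorbable G (u.eraseIdx i) (idxAfterErase i k) (idxAfterErase i l) := by
  obtain ⟨hkl, s, t, hs, ht, hst, hbetween⟩ := h
  exact absorbable_eraseIdx hk hl hkl hs ht hst fun m r _ ↦ hbetween m r

theorem Absorbable.eraseIdx_trans {u : Word G} {a b c : ℕ} (hab : Absorbable G u a b)
    (hbc : Absorbable G u b c) (hca : c ≠ a) :
    Absorbable G (u.eraseIdx b) (idxAfterErase b a) (idxAfterErase b c) := by
  obtain ⟨hab, s, w, hs, hw, hsw, hbetween₁⟩ := hab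
  obtain ⟨hbc, w', t, hw', ht, hwt, hbetween₂⟩ := hbc
  obtain rfl : w = w' := Option.some_inj.mp (hw.symm.trans hw')
  refine absorbable_eraseIdx hab hbc.symm hca.symm hs ht (hsw.trans hwt) fun m r hmb hm hr ↦ ?_
  by_cases hm₁ : a < m ∧ m < b ∨ b < m ∧ m < a
  · exact hbetween₁ m r hm₁ hr
  · exact ((hbetween₂ m r (by omega) hr).symm.of_subset_right hsw).symm

theorem Absorbable.wEquiv_eraseIdx {u : Word G} {i k : ℕ} (hik : Absorbable G u i k)
    (hki : Absorbable G u k i) : WEquiv G (u.eraseIdx i) (u.eraseIdx k) := by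
  wlog hlt : i < k generalizing i k
  · exact (this hki hik ((not_lt.mp hlt).lt_of_ne hik.1.symm)).symm
  obtain ⟨-, t, s, ht, hs, hts, -⟩ := hki
  obtain ⟨A, M, B, s', t', rfl, rfl, rfl, hst, hMs⟩ := (absorbable_iff_of_lt hlt).mp hik
  obtain rfl : s' = s := by simpa using hs
  obtain rfl : t' = t := by simpa [List.getElem?_append_cons_append_cons_length] using ht
  obtain rfl : s' = t' := Subtype.ext (hst.antisymm hts)
  rw [List.eraseIdx_append_cons_length, List.eraseIdx_append_cons_append_cons]
  exact (wEquiv_move_across hMs A B).symm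

theorem Absorbable.exists_eraseIdx {u : Word G} {i j k l : ℕ} (hkl : Absorbable G u k l)
    (hij : Absorbable G u i j) (hki : k ≠ i) (hne : ¬ (l = i ∧ j = k)) :
    ∃ l', Absorbable G (u.eraseIdx i) (idxAfterErase i k) l' := by
  by_cases hli : l = i
  · subst hli
    exact ⟨_, hkl.eraseIdx_trans hij fun hjk ↦ hne ⟨rfl, hjk⟩⟩
  · exact ⟨_, hkl.eraseIdx_of_ne hki hli⟩

theorem Absorbable.wEquiv_or_exists_eraseIdx {u : Word G} {i j k l : ℕ}
    (hij : Absorbable G u i j) (hkl : Absorbable G u k l) (hik : i ≠ k) :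
    WEquiv G (u.eraseIdx i) (u.eraseIdx k) ∨
      (∃ l', Absorbable G (u.eraseIdx i) (idxAfterErase i k) l') ∧
        ∃ j', Absorbable G (u.eraseIdx k) (idxAfterErase k i) j' := by
  by_cases hmutual : j = k ∧ l = i
  · obtain ⟨rfl, rfl⟩ := hmutual
    exact .inl (hij.wEquiv_eraseIdx hkl)
  · exact .inr ⟨hkl.exists_eraseIdx hij hik.symm (by tauto), hij.exists_eraseIdx hkl hik (by tauto)⟩

theorem Absorbable.exists_of_lSwapStep {u v : Word G} {i j : ℕ} (h : Absorbable G u i j)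
    (huv : LSwapStep G u v) :
    ∃ i' j', Absorbable G v i' j' ∧ WEquiv G (u.eraseIdx i) (v.eraseIdx i') := by
  obtain ⟨c, d, x, y, hxy, rfl, rfl⟩ := huv
  exact ⟨_, _, h.swap hxy, wEquiv_eraseIdx_swap hxy i⟩

theorem Absorbable.exists_of_wEquiv {u v : Word G} {i j : ℕ} (h : Absorbable G u i j)
    (huv : WEquiv G u v) :
    ∃ i' j', Absorbable G v i' j' ∧ WEquiv G (u.eraseIdx i) (v.eraseIdx i') := by
  induction huv with
  | refl => exact ⟨i, j, h, .refl⟩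
  | tail _ hstep ih =>
    obtain ⟨i', j', h', he⟩ := ih
    obtain ⟨i'', j'', h'', he'⟩ := h'.exists_of_lSwapStep hstep
    exact ⟨i'', j'', h'', he.trans he'⟩

def AbsorbStepMod (G : SimpleGraph V) (u v : Word G) : Prop :=
  ∃ w i j, WEquiv G u w ∧ Absorbable G w i j ∧ v = w.eraseIdx i

theorem AbsorbStepMod.of_wEquiv ⦃u u' v : Word G⦄ (hu : WEquiv G u u')
    (h : AbsorbStepMod G u' v) : AbsorbStepMod G u v := by
  obtain ⟨w, i, j, hw, hij, rfl⟩ := h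
  exact ⟨w, i, j, hu.trans hw, hij, rfl⟩

theorem AbsorbStepMod.length_lt {u v : Word G} (h : AbsorbStepMod G u v) :
    v.length < u.length := by
  obtain ⟨w, i, j, hw, hij, rfl⟩ := h
  have hi := hij.lt_length
  rw [hw.length_eq, List.length_eraseIdx_of_lt hi]
  omega

theorem wellFounded_flip_absorbStepMod : WellFounded (flip (AbsorbStepMod G)) :=
  Subrelation.wf (fun h ↦ AbsorbStepMod.length_lt h) (InvImage.wf List.length wellFounded_lt)

theorem AbsorbStepMod.nsSteps {u v : Word G} (h : AbsorbStepMod G u v) :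
    Relation.ReflTransGen (NSStep G) u v := by
  obtain ⟨w, i, j, hw, hij, rfl⟩ := h
  exact hw.nsSteps.trans hij.nsSteps_eraseIdx

theorem isNormalForm_absorbStepMod_iff {u : Word G} :
    Relation.IsNormalForm (AbsorbStepMod G) u ↔ WIsReduced G u := by
  rw [← not_iff_not, not_wIsReduced_iff]
  constructor
  · intro h
    obtain ⟨v, w, i, j, huw, hij, -⟩ := not_forall_not.mp h
    obtain ⟨i', j', hij', -⟩ := hij.exists_of_wEquiv huw.symm
    exact ⟨i', j', hij'⟩
  · rintro ⟨i, j, hij⟩ hu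
    exact hu _ ⟨u, i, j, .refl, hij, rfl⟩

theorem AbsorbStepMod.locally_confluent ⦃u v₁ v₂ : Word G⦄ (h₁ : AbsorbStepMod G u v₁)
    (h₂ : AbsorbStepMod G u v₂) :
    WEquiv G v₁ v₂ ∨ ∃ z₁ z₂, AbsorbStepMod G v₁ z₁ ∧ AbsorbStepMod G v₂ z₂ ∧ WEquiv G z₁ z₂ := by
  obtain ⟨w, i, j, huw, hij, rfl⟩ := h₁
  obtain ⟨w₂, k₂, l₂, huw₂, hkl₂, rfl⟩ := h₂
  obtain ⟨k, l, hkl, hk⟩ := hkl₂.exists_of_wEquiv (huw₂.symm.trans huw)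
  by_cases hik : i = k
  · subst hik
    exact .inl hk.symm
  rcases hij.wEquiv_or_exists_eraseIdx hkl hik with he | ⟨⟨l', hl'⟩, ⟨j', hj'⟩⟩
  · exact .inl (he.trans hk.symm)
  · refine .inr ⟨_, _, ⟨_, _, _, .refl, hl', rfl⟩, ⟨_, _, _, hk, hj', rfl⟩, ?_⟩
    rw [List.eraseIdx_eraseIdx_comm]
    exact .refl

theorem exists_absorbStepMod_of_nsSteps {u v : Word G} (h : Relation.ReflTransGen (NSStep G) u v) :
    ∃ v₀, Relation.ReflTransGen (AbsorbStepMod G) u v₀ ∧ WEquiv G v₀ v := by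
  induction h with
  | refl => exact ⟨u, .refl, .refl⟩
  | tail _ hstep ih =>
    obtain ⟨v₀, huv₀, hv₀⟩ := ih
    rcases hstep with hswap | habsorb
    · exact ⟨v₀, huv₀, hv₀.tail hswap⟩
    · obtain ⟨i, j, hij, rfl⟩ := habsorb.exists_absorbable
      exact ⟨_, huv₀.tail ⟨_, i, j, hv₀, hij, rfl⟩, .refl⟩

end Words

/-- Every word admits exactly one non-splitting reduction, up to permutation of
adjacent commuting letters. -/
theorem nonsplitting_reduction_exists_unique (G : SimpleGraph V) (u : Word G) :
    ∃ v, NSRed G u v ∧ ∀ v', NSRed G u v' → WEquiv G v v' := by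
  obtain ⟨v, huv, hv⟩ := Relation.exists_isNormalForm wellFounded_flip_absorbStepMod u
  refine ⟨v, ⟨Relation.ReflTransGen.lift' id (fun _ _ h ↦ h.nsSteps) _ _ huv,
    isNormalForm_absorbStepMod_iff.mp hv⟩, ?_⟩
  rintro v' ⟨huv', hv'⟩
  obtain ⟨v₀, huv₀, hv₀v'⟩ := exists_absorbStepMod_of_nsSteps huv'
  have hv₀ : Relation.IsNormalForm (AbsorbStepMod G) v₀ :=
    (isNormalForm_absorbStepMod_iff.mpr hv').of_equiv AbsorbStepMod.of_wEquiv hv₀v'.symm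
  have hvv₀ : WEquiv G v v₀ := Relation.newman_mod AbsorbStepMod.of_wEquiv wEquiv_equivalence
    wellFounded_flip_absorbStepMod AbsorbStepMod.locally_confluent huv huv₀ hv hv₀
  exact hvv₀.trans hv₀v'
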